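/- Let W be the depth-p finite singular module with cyclic vector w satisfying z^p g[[z]]·w = 0, n⁺[[z]]·w = 0, and H z^i w = ⟨a_i, H z^i⟩ w for H ∈ h, 0 ≤ i ≤ p-1, inside a smooth level-κ affine module. Then for n > 2(p-1) the Sugawara operator L_n annihilates w, and for p ≤ n ≤ 2(p-1) one has L_n w = (2(κ+h^∨))^{-1} ∑_{j=1-p+n}^{p-1} (a_j | a_{n-j}) · w, while L_{p-1} w = (2(κ+h^∨))^{-1} (∑_{j=0}^{p-1} (a_j | a_{p-1-j}) + 2p(ρ | a_{p-1})) · w. -/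

import Mathlib

open Finset

/-- A smooth representation of the affine Lie algebra `ĝ = g((z)) ⊕ ℂK` of level `κ`,
recorded through the action operators of the elements `X z^n`. -/
structure AffineRepresentation (g : Type*) [LieRing g] [LieAlgebra ℂ g]
    (B : LinearMap.BilinForm ℂ g) (κ : ℂ)
    (M : Type*) [AddCommGroup M] [Module ℂ M] where
  /-- The action of `X z^n`. -/
  act : g →ₗ[ℂ] ℤ → Module.End ℂ M
  /-- The affine commutation relations, with the central element acting as `κ`. -/
  comm : ∀ (X Y : g) (m n : ℤ) (v : M),
    act X m (act Y n v) - act Y n (act X m v)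
      = act ⁅X, Y⁆ (m + n) v + (if m + n = 0 then (m : ℂ) * B X Y * κ else 0) • v
  /-- Smoothness: every vector is annihilated by `z^N g[[z]]` for `N ≫ 0`. -/
  smooth : ∀ (v : M) (X : g), ∃ N : ℕ, ∀ n : ℤ, (N : ℤ) ≤ n → act X n v = 0

section

variable {g : Type*} [LieRing g] [LieAlgebra ℂ g]
  {B : LinearMap.BilinForm ℂ g} {κ : ℂ}
  {M : Type*} [AddCommGroup M] [Module ℂ M]

variable (ρ : AffineRepresentation g B κ M)

/-- The normally-ordered product `:X z^{-j} Y z^{n+j}:` acting on a vector: the operator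
attached to the nonnegative power of `z` is applied first (i.e. placed to the right). -/
noncomputable def nord (X Y : g) (j n : ℤ) (v : M) : M :=
  if 0 ≤ n + j then ρ.act X (-j) (ρ.act Y (n + j) v)
  else ρ.act Y (n + j) (ρ.act X (-j) v)

/-- The Sugawara operator `L_n = (2(κ+h^∨))⁻¹ ∑_{j∈ℤ} ∑ₖ :Xₖ z^{-j} Xᵏ z^{n+j}:` acting
on a smooth module, computed in a Cartan–Weyl adapted pair of dual bases: `(Hᵢ)` is an
orthonormal basis of the Cartan subalgebra (self-dual), and for each positive root `α`
(indexed by `P`) the dual of `E_α` is `((α|α)/2)·F_α` and the dual of `F_α` is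
`((α|α)/2)·E_α`; `ns q = (α|α)` denotes the squared length of the root `q`. -/
noncomputable def sugawaraL {r : ℕ} (Hb : Fin r → g) {P : Type*} [Fintype P]
    (Ea Fa : P → g) (ns : P → ℂ) (h : ℂ) (n : ℤ) (v : M) : M :=
  (2 * (κ + h))⁻¹ •
    ∑ᶠ j : ℤ,
      (∑ i, nord ρ (Hb i) (Hb i) j n v
        + ∑ q, (ns q / 2) • (nord ρ (Fa q) (Ea q) j n v + nord ρ (Ea q) (Fa q) j n v))

end

/-! On `w` every mode `X z^m` with `m ≥ p` vanishes, so for `n ≥ p - 1` the only terms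
`:X z^{-j} Y z^{n+j}:` of `L_n w` that survive have `-n ≤ j ≤ 0`, i.e. both factors of
nonnegative degree. A Cartan term then acts by the scalar `(a_{-j} | a_{n+j})`. In a root pair,
`F_α z^{-j} E_α z^{n+j}` kills `w`, while `E_α z^{-j} F_α z^{n+j} w = [E_α, F_α] z^n w` because
`E_α z^{-j}` kills `w`; the central term could only appear for `n = j = 0`, where its
coefficient `-j` vanishes. Hence the root pair of `α` contributes `⟨α, a_n⟩ w` for every `j` in
the window. Since `a_n ≠ 0` forces `n = p - 1`, where the window has `p` elements, the roots
contribute `p ∑_{α>0} ⟨α, a_{p-1}⟩ = 2p (ρ | a_{p-1})` in all. -/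

namespace AffineRepresentation

variable {g : Type*} [LieRing g] [LieAlgebra ℂ g] {B : LinearMap.BilinForm ℂ g} {κ : ℂ}
  {M : Type*} [AddCommGroup M] [Module ℂ M] (ρ : AffineRepresentation g B κ M)

theorem act_sum_smul {ι : Type*} (s : Finset ι) (c : ι → ℂ) (X : ι → g) (n : ℤ) (v : M) :
    ρ.act (∑ i ∈ s, c i • X i) n v = ∑ i ∈ s, c i • ρ.act (X i) n v := by
  simp only [map_sum, map_smul, Finset.sum_apply, Pi.smul_apply, LinearMap.sum_apply,
    LinearMap.smul_apply]

end AffineRepresentation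

section NormalOrdering

variable {g : Type*} [LieRing g] [LieAlgebra ℂ g] {B : LinearMap.BilinForm ℂ g} {κ : ℂ}
  {M : Type*} [AddCommGroup M] [Module ℂ M] (ρ : AffineRepresentation g B κ M) {w : M}

theorem nord_eq_zero_of_annihilated {p : ℤ} (hzp : ∀ (X : g) (m : ℤ), p ≤ m → ρ.act X m w = 0)
    {j n : ℤ} (hn : p - 1 ≤ n) (hj : j < -n ∨ 0 < j) (X Y : g) : nord ρ X Y j n w = 0 := by
  unfold nord
  split_ifs
  · rw [hzp Y (n + j) (by omega), map_zero]
  · rw [hzp X (-j) (by omega), map_zero]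

theorem nord_eq_smul_of_eigen {X Y : g} {c d : ℤ → ℂ}
    (hX : ∀ m, 0 ≤ m → ρ.act X m w = c m • w) (hY : ∀ m, 0 ≤ m → ρ.act Y m w = d m • w)
    {j n : ℤ} (hj : j ≤ 0) (hnj : 0 ≤ n + j) :
    nord ρ X Y j n w = (c (-j) * d (n + j)) • w := by
  rw [nord, if_pos hnj, hY _ hnj, map_smul, hX _ (by omega), smul_smul, mul_comm]

theorem nord_eq_act_bracket {X Y : g} {j n : ℤ} (hj : j ≤ 0) (hnj : 0 ≤ n + j)
    (hX : ρ.act X (-j) w = 0) : nord ρ X Y j n w = ρ.act ⁅X, Y⁆ n w := by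
  have hcomm := ρ.comm X Y (-j) (n + j) w
  rw [hX, map_zero, sub_zero, show -j + (n + j) = n by ring] at hcomm
  rw [nord, if_pos hnj, hcomm, add_eq_left]
  split_ifs with hn
  · obtain rfl : j = 0 := by omega
    simp
  · exact zero_smul ℂ w

theorem nord_root_pair_eq {r : ℕ} {Hb : Fin r → g} {A : ℤ → Fin r → ℂ}
    (hH : ∀ i m, 0 ≤ m → ρ.act (Hb i) m w = A m i • w)
    {E F : g} {α : Fin r → ℂ} (hα : α ⬝ᵥ α ≠ 0)
    (hEF : ⁅E, F⁆ = ∑ i, (2 / (α ⬝ᵥ α) * α i) • Hb i)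
    (hE : ∀ m, 0 ≤ m → ρ.act E m w = 0) {j n : ℤ} (hj : j ≤ 0) (hnj : 0 ≤ n + j) :
    (α ⬝ᵥ α / 2) • (nord ρ F E j n w + nord ρ E F j n w) = (α ⬝ᵥ A n) • w := by
  have hFE : nord ρ F E j n w = 0 := by rw [nord, if_pos hnj, hE _ hnj, map_zero]
  rw [hFE, zero_add, nord_eq_act_bracket ρ hj hnj (hE _ (by omega)), hEF,
    AffineRepresentation.act_sum_smul]
  simp only [hH _ n (by omega), smul_smul, ← sum_smul, mul_sum]
  congr 1
  refine sum_congr rfl fun i _ => ?_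
  field_simp

end NormalOrdering

theorem sum_Icc_zero_sub_one_eq_sum_range {α : Type*} [AddCommMonoid α] (f : ℤ → α) (p : ℕ) :
    ∑ k ∈ Icc 0 ((p : ℤ) - 1), f k = ∑ k ∈ range p, f k := by
  rw [Int.Icc_eq_finset_map, sum_map, show (p : ℤ) - 1 + 1 - 0 = p by ring, Int.toNat_natCast]
  simp

section Sugawara

variable {g : Type*} [LieRing g] [LieAlgebra ℂ g] {B : LinearMap.BilinForm ℂ g} {κ : ℂ}
  {M : Type*} [AddCommGroup M] [Module ℂ M] (ρ : AffineRepresentation g B κ M)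
  {r : ℕ} (Hb : Fin r → g) {P : Type*} [Fintype P] (Ea Fa : P → g) (ns : P → ℂ)

noncomputable def sugawaraSummand (j n : ℤ) (v : M) : M :=
  ∑ i, nord ρ (Hb i) (Hb i) j n v
    + ∑ q, (ns q / 2) • (nord ρ (Fa q) (Ea q) j n v + nord ρ (Ea q) (Fa q) j n v)

theorem sugawaraL_eq_smul_finsum (h : ℂ) (n : ℤ) (v : M) :
    sugawaraL ρ Hb Ea Fa ns h n v = (2 * (κ + h))⁻¹ • ∑ᶠ j, sugawaraSummand ρ Hb Ea Fa ns j n v :=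
  rfl

variable {ρ Hb Ea Fa} {w : M}

theorem sugawaraSummand_eq_zero_of_annihilated {p : ℤ}
    (hzp : ∀ (X : g) (m : ℤ), p ≤ m → ρ.act X m w = 0) {j n : ℤ} (hn : p - 1 ≤ n)
    (hj : j < -n ∨ 0 < j) : sugawaraSummand ρ Hb Ea Fa ns j n w = 0 := by
  simp only [sugawaraSummand, nord_eq_zero_of_annihilated ρ hzp hn hj, add_zero, smul_zero,
    sum_const_zero]

variable {αv : P → Fin r → ℂ} {A : ℤ → Fin r → ℂ}

theorem sugawaraSummand_eq_smul (hH : ∀ i m, 0 ≤ m → ρ.act (Hb i) m w = A m i • w)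
    (hnplus : ∀ q m, 0 ≤ m → ρ.act (Ea q) m w = 0) (hns : ∀ q, αv q ⬝ᵥ αv q ≠ 0)
    (hEF : ∀ q, ⁅Ea q, Fa q⁆ = ∑ i, (2 / (αv q ⬝ᵥ αv q) * αv q i) • Hb i)
    {j n : ℤ} (hj : j ≤ 0) (hnj : 0 ≤ n + j) :
    sugawaraSummand ρ Hb Ea Fa (fun q => αv q ⬝ᵥ αv q) j n w
      = (A (-j) ⬝ᵥ A (n + j) + (∑ q, αv q) ⬝ᵥ A n) • w := by
  rw [sugawaraSummand, add_smul, sum_dotProduct, sum_smul, dotProduct, sum_smul]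
  congr 1
  · exact sum_congr rfl fun i _ => nord_eq_smul_of_eigen ρ (hH i) (hH i) hj hnj
  · exact sum_congr rfl fun q _ =>
      nord_root_pair_eq ρ hH (hns q) (hEF q) (hnplus q) hj hnj

theorem sugawaraL_apply_of_annihilated {p : ℕ}
    (hzp : ∀ (X : g) (m : ℤ), p ≤ m → ρ.act X m w = 0)
    (hA : ∀ k : ℤ, ¬(0 ≤ k ∧ k < p) → A k = 0)
    (hH : ∀ i m, 0 ≤ m → ρ.act (Hb i) m w = A m i • w)
    (hnplus : ∀ q m, 0 ≤ m → ρ.act (Ea q) m w = 0) (hns : ∀ q, αv q ⬝ᵥ αv q ≠ 0)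
    (hEF : ∀ q, ⁅Ea q, Fa q⁆ = ∑ i, (2 / (αv q ⬝ᵥ αv q) * αv q i) • Hb i)
    (h : ℂ) {n : ℤ} (hn : p - 1 ≤ n) :
    sugawaraL ρ Hb Ea Fa (fun q => αv q ⬝ᵥ αv q) h n w
      = ((2 * (κ + h))⁻¹ * (∑ k ∈ Icc 0 ((p : ℤ) - 1), A k ⬝ᵥ A (n - k)
          + p * ((∑ q, αv q) ⬝ᵥ A n))) • w := by
  have hterm : ∀ k ∈ Icc 0 ((p : ℤ) - 1),
      sugawaraSummand ρ Hb Ea Fa (fun q => αv q ⬝ᵥ αv q) (-k) n w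
        = (A k ⬝ᵥ A (n - k) + (∑ q, αv q) ⬝ᵥ A n) • w := by
    intro k hk
    rw [mem_Icc] at hk
    rw [sugawaraSummand_eq_smul hH hnplus hns hEF (by omega) (by omega), neg_neg, ← sub_eq_add_neg]
  have hsupp :
      Function.support (fun k => sugawaraSummand ρ Hb Ea Fa (fun q => αv q ⬝ᵥ αv q) (-k) n w)
        ⊆ Icc 0 ((p : ℤ) - 1) := by
    intro k hk
    by_contra hk'
    rw [coe_Icc, Set.mem_Icc] at hk'
    refine hk ?_
    dsimp only
    by_cases hwindow : 0 ≤ k ∧ k ≤ n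
    · rw [sugawaraSummand_eq_smul hH hnplus hns hEF (by omega) (by omega), neg_neg,
        hA k (by omega), hA n (by omega), zero_dotProduct, dotProduct_zero, add_zero, zero_smul]
    · exact sugawaraSummand_eq_zero_of_annihilated _ hzp hn (by omega)
  rw [sugawaraL_eq_smul_finsum, ← finsum_comp_equiv (Equiv.neg ℤ)]
  simp only [Equiv.neg_apply]
  rw [finsum_eq_finsetSum_of_support_subset _ hsupp, sum_congr rfl hterm, ← sum_smul, smul_smul,
    sum_add_distrib, sum_const, Int.card_Icc, nsmul_eq_mul, show (p : ℤ) - 1 + 1 - 0 = p by ring,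
    Int.toNat_natCast]

end Sugawara

/-- The cyclic vector `w` of the depth-`p` finite singular module, inside a smooth
level-`κ` module, is a common eigenvector of the Sugawara operators `L_n` for
`n ≥ p-1`: `L_n w = 0` for `n > 2(p-1)`,
`L_n w = (2(κ+h^∨))⁻¹ ∑_{j=1-p+n}^{p-1} (a_j|a_{n-j}) · w` for `p ≤ n ≤ 2(p-1)`, and
`L_{p-1} w = (2(κ+h^∨))⁻¹ (∑_{j=0}^{p-1} (a_j|a_{p-1-j}) + 2p(ρ|a_{p-1})) · w`.
Here `(aᵢ)` are the Cartan parameters of the singular character (with `a₀ = λ` the tame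
part), expressed in coordinates with respect to an orthonormal basis `(Hᵢ)` of the
Cartan subalgebra, `(·|·)` denotes the induced pairing `∑ᵢ xᵢyᵢ` of coordinate vectors,
`αv q` are the coordinates of the positive root `q`, and `ρv = (1/2)∑_{α>0} α` is the
half-sum of positive roots.  The relations defining `w` are `z^p g[[z]]·w = 0`,
`n⁺[[z]]·w = 0` and `H z^i w = ⟨aᵢ, H z^i⟩ w`. -/
theorem sugawara_eigenvalues_cyclic_vector
    {g : Type*} [LieRing g] [LieAlgebra ℂ g]
    {B : LinearMap.BilinForm ℂ g} {κ : ℂ}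
    {M : Type*} [AddCommGroup M] [Module ℂ M]
    (ρ : AffineRepresentation g B κ M)
    {r : ℕ} (Hb : Fin r → g)
    {P : Type*} [Fintype P] (Ea Fa : P → g) (αv : P → Fin r → ℂ)
    (hns : ∀ q, (∑ i, αv q i * αv q i) ≠ 0)
    (hEF : ∀ q, ⁅Ea q, Fa q⁆
      = ∑ i, (2 / (∑ i', αv q i' * αv q i') * αv q i) • Hb i)
    (h : ℂ)
    (p : ℕ) (a : Fin p → Fin r → ℂ)
    (w : M)
    (hzp : ∀ (X : g) (j : ℤ), (p : ℤ) ≤ j → ρ.act X j w = 0)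
    (hnplus : ∀ (q : P) (j : ℤ), 0 ≤ j → ρ.act (Ea q) j w = 0)
    (hcartan : ∀ (i : Fin r) (j : ℤ) (hj : 0 ≤ j) (hj' : j < p),
      ρ.act (Hb i) j w = a ⟨j.toNat, by omega⟩ i • w) :
    -- the integer-indexed coordinates of the Cartan parameters, the pairing `(·|·)` and
    -- the half-sum of positive roots
    ∀ A : ℤ → Fin r → ℂ,
      (∀ j : ℤ, A j = if h : 0 ≤ j ∧ j < p then a ⟨j.toNat, by omega⟩ else 0) →
    ∀ ip : (Fin r → ℂ) → (Fin r → ℂ) → ℂ,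
      (∀ x y, ip x y = ∑ i, x i * y i) →
    ∀ ρv : Fin r → ℂ, (∀ i, ρv i = (2 : ℂ)⁻¹ * ∑ q, αv q i) →
    (∀ n : ℤ, 2 * ((p : ℤ) - 1) < n →
      sugawaraL ρ Hb Ea Fa (fun q => ∑ i, αv q i * αv q i) h n w = 0) ∧
    (∀ n : ℤ, (p : ℤ) ≤ n → n ≤ 2 * ((p : ℤ) - 1) →
      sugawaraL ρ Hb Ea Fa (fun q => ∑ i, αv q i * αv q i) h n w
        = ((2 * (κ + h))⁻¹
            * ∑ j ∈ Finset.Icc (1 - (p : ℤ) + n) ((p : ℤ) - 1), ip (A j) (A (n - j))) • w) ∧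
    (sugawaraL ρ Hb Ea Fa (fun q => ∑ i, αv q i * αv q i) h ((p : ℤ) - 1) w
      = ((2 * (κ + h))⁻¹
          * ((∑ j ∈ Finset.range p, ip (A j) (A ((p : ℤ) - 1 - j)))
            + 2 * p * ip ρv (A ((p : ℤ) - 1)))) • w) := by
  intro A hA ip hip ρv hρv
  obtain rfl : ip = dotProduct := funext₂ hip
  have hA0 : ∀ k : ℤ, ¬(0 ≤ k ∧ k < p) → A k = 0 := fun k hk => by rw [hA, dif_neg hk]
  have hH : ∀ i m, 0 ≤ m → ρ.act (Hb i) m w = A m i • w := by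
    intro i m hm
    by_cases hmp : m < p
    · rw [hcartan i m hm hmp, hA, dif_pos ⟨hm, hmp⟩]
    · rw [hzp _ m (by omega), hA0 m (by omega), Pi.zero_apply, zero_smul]
  have hL := fun n (hn : (p : ℤ) - 1 ≤ n) =>
    sugawaraL_apply_of_annihilated hzp hA0 hH hnplus hns hEF h hn
  have hρv' : ∑ q, αv q = (2 : ℂ) • ρv := by
    ext i
    simp [hρv i, Finset.sum_apply]
  refine ⟨fun n hn => (hL n (by omega)).trans ?_, fun n hn hn' => (hL n (by omega)).trans ?_,
    (hL _ le_rfl).trans ?_⟩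
  · have hvanish : ∀ k ∈ Icc 0 ((p : ℤ) - 1), A k ⬝ᵥ A (n - k) = 0 := fun k hk => by
      rw [mem_Icc] at hk
      rw [hA0 (n - k) (by omega), dotProduct_zero]
    rw [sum_eq_zero hvanish, hA0 n (by omega), dotProduct_zero, mul_zero, add_zero, mul_zero,
      zero_smul]
  · rw [hA0 n (by omega), dotProduct_zero, mul_zero, add_zero]
    congr 2
    refine (sum_subset (Icc_subset_Icc_left (by omega)) fun k hk hk' => ?_).symm
    rw [mem_Icc] at hk hk'
    rw [hA0 (n - k) (by omega), dotProduct_zero]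
  · rw [sum_Icc_zero_sub_one_eq_sum_range, hρv', smul_dotProduct, smul_eq_mul]
    congr 2
    ring
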